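/- For every natural number n, the function g(T) = (1-T)^{2n} · ₂F₁(-n, -n; 1; T²/(T-1)²) equals Σ_{k=0}^n (C(n,k))² T^{2k} (1-T)^{2(n-k)}, is convex in T on all of ℝ, and is symmetric about T = 1/2. -/

import Mathlib

open Finset Complex

/-- A finite sum of convex functions is convex. -/
lemma convexOn_finset_sum' {ι : Type*} (t : Finset ι) (f : ι → ℝ → ℝ)
    (h : ∀ i ∈ t, ConvexOn ℝ Set.univ (f i)) :
    ConvexOn ℝ Set.univ (fun x => ∑ i ∈ t, f i x) := by
  classical
  induction t using Finset.induction_on with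
  | empty => simpa using convexOn_const 0 convex_univ
  | insert _ _ hx ih =>
    rename_i a s
    simp only [Finset.sum_insert hx]
    exact (h a (Finset.mem_insert_self a s)).add
      (ih fun i hi => h i (Finset.mem_insert_of_mem hi))

/-- Roots-of-unity filter. -/
lemma root_filter' (n : ℕ) {ζ : ℂ} (hζ : IsPrimitiveRoot ζ (n + 1))
    {i j : ℕ} (hi : i ≤ n) (hj : j ≤ n) :
    ∑ m ∈ range (n + 1), (ζ ^ j * (ζ ^ i)⁻¹) ^ m
      = if i = j then ((n : ℂ) + 1) else 0 := by
  have hζ0 : ζ ≠ 0 := hζ.ne_zero (Nat.succ_ne_zero n)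
  have hone : ζ ^ (n + 1) = 1 := hζ.pow_eq_one
  by_cases hij : i = j
  · subst hij
    simp [mul_inv_cancel₀ (pow_ne_zero i hζ0)]
  · rw [if_neg hij]
    set x : ℂ := ζ ^ j * (ζ ^ i)⁻¹ with hx
    have hxN : x ^ (n + 1) = 1 := by
      have h1 : (ζ ^ j) ^ (n + 1) = 1 := by rw [← pow_mul, mul_comm, pow_mul, hone, one_pow]
      have h2 : (ζ ^ i) ^ (n + 1) = 1 := by rw [← pow_mul, mul_comm, pow_mul, hone, one_pow]
      rw [hx, mul_pow, h1, inv_pow, h2, inv_one, mul_one]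
    have hx1 : x ≠ 1 := by
      intro h1
      apply hij
      have : ζ ^ i = ζ ^ j := by
        rw [hx, mul_inv_eq_one₀ (pow_ne_zero i hζ0)] at h1
        exact h1.symm
      exact hζ.pow_inj (Nat.lt_succ_of_le hi) (Nat.lt_succ_of_le hj) this
    rw [geom_sum_eq hx1, hxN]
    simp

lemma complex_key' (n : ℕ) {ζ : ℂ} (hζ : IsPrimitiveRoot ζ (n + 1)) (T : ℝ) :
    ∑ m ∈ range (n + 1),
        ((T : ℂ) * ζ ^ m + (1 - T)) ^ n * ((T : ℂ) * (ζ ^ m)⁻¹ + (1 - T)) ^ n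
      = ((n : ℂ) + 1) *
        ∑ k ∈ range (n + 1), (n.choose k : ℂ) ^ 2 * T ^ (2 * k) * (1 - T) ^ (2 * (n - k)) := by
  have expand : ∀ m ∈ range (n + 1),
      ((T : ℂ) * ζ ^ m + (1 - T)) ^ n * ((T : ℂ) * (ζ ^ m)⁻¹ + (1 - T)) ^ n
        = ∑ j ∈ range (n + 1), ∑ i ∈ range (n + 1),
            ((n.choose j : ℂ) * (n.choose i : ℂ) * T ^ (j + i) *
              (1 - T) ^ ((n - j) + (n - i))) * (ζ ^ j * (ζ ^ i)⁻¹) ^ m := by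
    intro m _
    rw [add_pow, add_pow, Finset.sum_mul_sum]
    refine Finset.sum_congr rfl fun j _ => Finset.sum_congr rfl fun i _ => ?_
    simp only [mul_pow, ← pow_mul, inv_pow, ← inv_pow, pow_add]
    ring
  rw [Finset.sum_congr rfl expand, Finset.sum_comm]
  rw [Finset.sum_congr rfl (fun j (hj : j ∈ range (n+1)) => Finset.sum_comm ..)]
  have step : ∀ j ∈ range (n + 1),
      ∑ i ∈ range (n + 1), ∑ m ∈ range (n + 1),
          ((n.choose j : ℂ) * (n.choose i : ℂ) * T ^ (j + i) *
            (1 - T) ^ ((n - j) + (n - i))) * (ζ ^ j * (ζ ^ i)⁻¹) ^ m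
        = ((n : ℂ) + 1) * ((n.choose j : ℂ) ^ 2 * T ^ (2 * j) * (1 - T) ^ (2 * (n - j))) := by
    intro j hj
    have hj' : j ≤ n := Nat.lt_succ_iff.mp (Finset.mem_range.mp hj)
    have inner : ∀ i ∈ range (n + 1),
        ∑ m ∈ range (n + 1),
            ((n.choose j : ℂ) * (n.choose i : ℂ) * T ^ (j + i) *
              (1 - T) ^ ((n - j) + (n - i))) * (ζ ^ j * (ζ ^ i)⁻¹) ^ m
          = if i = j then ((n : ℂ) + 1) *
              ((n.choose j : ℂ) ^ 2 * T ^ (2 * j) * (1 - T) ^ (2 * (n - j))) else 0 := by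
      intro i hi
      have hi' : i ≤ n := Nat.lt_succ_iff.mp (Finset.mem_range.mp hi)
      rw [← Finset.mul_sum, root_filter' n hζ hi' hj']
      by_cases h : i = j
      · subst h
        rw [if_pos rfl, if_pos rfl, two_mul, two_mul]
        ring
      · simp [h]
    rw [Finset.sum_congr rfl inner, Finset.sum_ite_eq' (range (n+1)) j, if_pos hj]
  rw [Finset.sum_congr rfl step, ← Finset.mul_sum]

/-- The polynomial `g(T) = Σ_k C(n,k)² T^{2k} (1-T)^{2(n-k)}`, which equals the
terminating hypergeometric expression `(1-T)^{2n} ₂F₁(-n,-n;1;T²/(T-1)²)`. -/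
noncomputable def gFun (n : ℕ) (T : ℝ) : ℝ :=
  ∑ k ∈ Finset.range (n + 1), ((n.choose k : ℝ)) ^ 2 * T ^ (2 * k) * (1 - T) ^ (2 * (n - k))

lemma real_repr' (n : ℕ) {ζ : ℂ} (hζ : IsPrimitiveRoot ζ (n + 1)) (T : ℝ) :
    gFun n T = ((n : ℝ) + 1)⁻¹ *
      ∑ m ∈ range (n + 1), ‖(T : ℂ) * ζ ^ m + (1 - T)‖ ^ (2 * n) := by
  have hN : ((n : ℝ) + 1) ≠ 0 := by positivity
  rw [inv_mul_eq_div, eq_div_iff hN, mul_comm]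
  have habs : ‖ζ‖ = 1 :=
    Complex.norm_eq_one_of_pow_eq_one hζ.pow_eq_one (Nat.succ_ne_zero n)
  have hconj : (starRingEnd ℂ) ζ = ζ⁻¹ := (Complex.inv_eq_conj habs).symm
  have term : ∀ m ∈ range (n + 1),
      ((‖(T : ℂ) * ζ ^ m + (1 - T)‖ : ℂ)) ^ (2 * n)
        = ((T : ℂ) * ζ ^ m + (1 - T)) ^ n * ((T : ℂ) * (ζ ^ m)⁻¹ + (1 - T)) ^ n := by
    intro m _
    set w : ℂ := (T : ℂ) * ζ ^ m + (1 - T) with hw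
    have hcw : (starRingEnd ℂ) w = (T : ℂ) * (ζ ^ m)⁻¹ + (1 - T) := by
      rw [hw]
      simp [map_add, map_mul, map_pow, hconj, inv_pow, Complex.conj_ofReal]
    have h2 : ((‖w‖ : ℂ)) ^ 2 = w * (starRingEnd ℂ) w := by
      rw [Complex.mul_conj, Complex.normSq_eq_norm_sq]
      push_cast
      ring
    rw [pow_mul, h2, hcw, mul_pow]
  apply Complex.ofReal_injective
  rw [Complex.ofReal_sum]
  simp only [Complex.ofReal_pow]
  rw [Finset.sum_congr rfl term, complex_key' n hζ T]
  simp only [gFun]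
  push_cast
  ring

theorem hypergeom_convex_symm (n : ℕ) :
    (∀ T : ℝ, T ≠ 1 →
      (1 - T) ^ (2 * n) *
          ∑ k ∈ Finset.range (n + 1), ((n.choose k : ℝ)) ^ 2 * (T ^ 2 / (T - 1) ^ 2) ^ k =
        gFun n T) ∧
    ConvexOn ℝ Set.univ (gFun n) ∧
    ∀ T : ℝ, gFun n T = gFun n (1 - T) := by
  refine ⟨?_, ?_, ?_⟩
  · -- hypergeometric identity
    intro T hT
    have h1 : (1 : ℝ) - T ≠ 0 := sub_ne_zero.mpr (Ne.symm hT)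
    simp only [gFun]
    rw [Finset.mul_sum]
    refine Finset.sum_congr rfl fun k hk => ?_
    have hk' : k ≤ n := Nat.lt_succ_iff.mp (Finset.mem_range.mp hk)
    have h2 : ((T : ℝ) - 1) ^ 2 = (1 - T) ^ 2 := by ring
    have e : 2 * n = 2 * (n - k) + 2 * k := by omega
    have h4 : (T - 1) ^ (2 * k) = (1 - T) ^ (2 * k) := by rw [pow_mul, pow_mul, h2]
    rw [div_pow, ← pow_mul, ← pow_mul, h4, e, pow_add]
    have h3 : (1 - T) ^ (2 * k) ≠ 0 := pow_ne_zero _ h1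
    field_simp
  · -- convexity
    set ζ : ℂ := Complex.exp (2 * Real.pi * Complex.I / (n + 1)) with hζdef
    have hζ : IsPrimitiveRoot ζ (n + 1) := by
      have := Complex.isPrimitiveRoot_exp (n + 1) (Nat.succ_ne_zero n)
      simpa [hζdef] using this
    have hrepr : gFun n = fun T : ℝ => ((n : ℝ) + 1)⁻¹ *
        ∑ m ∈ range (n + 1), ‖(T : ℂ) * ζ ^ m + (1 - T)‖ ^ (2 * n) :=
      funext fun T => real_repr' n hζ T
    rw [hrepr]
    have hc : (0 : ℝ) ≤ ((n : ℝ) + 1)⁻¹ := by positivity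
    have hsum : ConvexOn ℝ Set.univ
        (fun T : ℝ => ∑ m ∈ range (n + 1), ‖(T : ℂ) * ζ ^ m + (1 - T)‖ ^ (2 * n)) := by
      apply convexOn_finset_sum'
      intro m _
      have haff : ConvexOn ℝ Set.univ
          (fun T : ℝ => ‖(AffineMap.lineMap (1 : ℂ) (ζ ^ m) : ℝ →ᵃ[ℝ] ℂ) T‖) := by
        have := convexOn_univ_norm.comp_affineMap
          (AffineMap.lineMap (1 : ℂ) (ζ ^ m) : ℝ →ᵃ[ℝ] ℂ)
        simpa [Set.preimage_univ, Function.comp_def] using this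
      have hpow := haff.pow (fun x _ => norm_nonneg _) (2 * n)
      have heq : (fun T : ℝ => ‖(T : ℂ) * ζ ^ m + (1 - T)‖ ^ (2 * n))
          = (fun T : ℝ => ‖(AffineMap.lineMap (1 : ℂ) (ζ ^ m) : ℝ →ᵃ[ℝ] ℂ) T‖) ^ (2 * n) := by
        funext T
        simp only [Pi.pow_apply, AffineMap.lineMap_apply_module]
        congr 2
        push_cast [Complex.real_smul]
        ring
      rw [heq]
      exact hpow
    have := hsum.smul hc
    simpa [smul_eq_mul] using this
  · -- symmetry
    intro T
    simp only [gFun]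
    conv_rhs => rw [← Finset.sum_range_reflect]
    refine Finset.sum_congr rfl fun k hk => ?_
    have hk' : k ≤ n := Nat.lt_succ_iff.mp (Finset.mem_range.mp hk)
    have h1 : n + 1 - 1 - k = n - k := by omega
    rw [h1, Nat.choose_symm hk', Nat.sub_sub_self hk', sub_sub_cancel]
    ring
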